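/- For λ ≥ β > 0 and s a nonnegative integer, ∫_{-π}^{π} (cos²θ/β² + sin²θ/λ²)^s dθ = (2π β / λ^(1+2s)) · ₂F₁(1/2, 1+s; 1; 1 - β²/λ²). -/

import Mathlib

open Real

/-- Pochhammer symbol (rising factorial) on the reals. -/
noncomputable def poch (a : ℝ) (n : ℕ) : ℝ := (ascPochhammer ℝ n).eval a

/-- Gauss hypergeometric series `₂F₁(a, b; c; z)`. -/
noncomputable def twoF1 (a b c z : ℝ) : ℝ :=
  ∑' n : ℕ, poch a n * poch b n / poch c n * z ^ n / (Nat.factorial n)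

lemma poch_zero (a : ℝ) : poch a 0 = 1 := by simp [poch]

lemma poch_succ (a : ℝ) (n : ℕ) : poch a (n + 1) = poch a n * (a + n) := by
  simp [poch, ascPochhammer_succ_right]

lemma poch_one (n : ℕ) : poch 1 n = n.factorial := by simp [poch]

lemma poch_pos {a : ℝ} (ha : 0 < a) (n : ℕ) : 0 < poch a n := by
  induction n with
  | zero => simp [poch_zero]
  | succ n ih =>
    rw [poch_succ]
    exact mul_pos ih (by positivity)

lemma poch_shift (a : ℝ) (n : ℕ) : a * poch (a + 1) n = poch a n * (a + n) := by
  induction n with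
  | zero => simp [poch_zero]
  | succ n ih =>
    rw [poch_succ, poch_succ]
    push_cast
    linear_combination (a + 1 + (n:ℝ)) * ih

lemma poch_two (n : ℕ) : poch 2 n = (n + 1).factorial := by
  induction n with
  | zero => simp [poch_zero]
  | succ n ih =>
    rw [poch_succ, ih, Nat.factorial_succ (n+1)]
    push_cast
    ring

/-- coefficient `(1/2)_n / n!` -/
noncomputable def cc (n : ℕ) : ℝ := poch (1/2) n / n.factorial

lemma cc_zero : cc 0 = 1 := by simp [cc, poch_zero]

lemma cc_nonneg (n : ℕ) : 0 ≤ cc n := by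
  have h1 := poch_pos (by norm_num : (0:ℝ) < 1/2) n
  have h2 : (0:ℝ) < (n.factorial : ℝ) := Nat.cast_pos.mpr n.factorial_pos
  exact div_nonneg h1.le h2.le

lemma cc_succ (n : ℕ) : ((n : ℝ) + 1) * cc (n + 1) = ((n : ℝ) + 1/2) * cc n := by
  rw [cc, cc, poch_succ, Nat.factorial_succ]
  have hf : ((n.factorial : ℝ)) ≠ 0 := Nat.cast_ne_zero.mpr n.factorial_ne_zero
  push_cast
  field_simp
  ring
-- reflection helper
lemma sum_reflect_pair (M : ℕ) :
    2 * ∑ j ∈ Finset.range (M + 1), (j : ℝ) * (cc j * cc (M - j))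
      = (M : ℝ) * ∑ j ∈ Finset.range (M + 1), cc j * cc (M - j) := by
  have hrefl : ∑ j ∈ Finset.range (M + 1), (j : ℝ) * (cc j * cc (M - j))
      = ∑ j ∈ Finset.range (M + 1), ((M - j : ℕ) : ℝ) * (cc (M - j) * cc j) := by
    rw [← Finset.sum_range_reflect (fun j => ((M - j : ℕ) : ℝ) * (cc (M - j) * cc j)) (M + 1)]
    apply Finset.sum_congr rfl
    intro j hj
    have hjM : j ≤ M := Nat.lt_succ_iff.mp (Finset.mem_range.mp hj)
    have h1 : M + 1 - 1 - j = M - j := by omega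
    have h2 : M - (M - j) = j := Nat.sub_sub_self hjM
    rw [h1, h2]
  rw [two_mul]
  nth_rewrite 2 [hrefl]
  rw [← Finset.sum_add_distrib, Finset.mul_sum]
  apply Finset.sum_congr rfl
  intro j hj
  have hjM : j ≤ M := Nat.lt_succ_iff.mp (Finset.mem_range.mp hj)
  have hcast : ((M - j : ℕ) : ℝ) = (M : ℝ) - j := by
    rw [Nat.cast_sub hjM]
  rw [hcast]
  ring

lemma conv_cc : ∀ N : ℕ, ∑ m ∈ Finset.range (N + 1), cc m * cc (N - m) = 1 := by
  intro N
  induction N with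
  | zero => simp [cc_zero]
  | succ N ih =>
    -- S1 = sum (j + 1/2) cc j cc (N - j)
    have hA : 2 * ∑ j ∈ Finset.range (N + 1), ((j : ℝ) + 1/2) * (cc j * cc (N - j))
        = ((N : ℝ) + 1) * ∑ m ∈ Finset.range (N + 1), cc m * cc (N - m) := by
      have := sum_reflect_pair N
      have hsplit : ∑ j ∈ Finset.range (N + 1), ((j : ℝ) + 1/2) * (cc j * cc (N - j))
          = (∑ j ∈ Finset.range (N + 1), (j : ℝ) * (cc j * cc (N - j)))
            + (1/2) * ∑ j ∈ Finset.range (N + 1), cc j * cc (N - j) := by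
        rw [Finset.mul_sum, ← Finset.sum_add_distrib]
        apply Finset.sum_congr rfl
        intro j _
        ring
      rw [hsplit]
      linarith [this]
    have hB : ∑ j ∈ Finset.range (N + 1), ((j : ℝ) + 1/2) * (cc j * cc (N - j))
        = ∑ i ∈ Finset.range (N + 2), (i : ℝ) * (cc i * cc (N + 1 - i)) := by
      rw [Finset.sum_range_succ' (fun i => (i : ℝ) * (cc i * cc (N + 1 - i))) (N + 1)]
      simp only [Nat.cast_zero, zero_mul, add_zero]
      apply Finset.sum_congr rfl
      intro j _
      have h1 : N + 1 - (j + 1) = N - j := by omega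
      rw [h1]
      push_cast
      have := cc_succ j
      linear_combination (-cc (N - j)) * this
    have hC : 2 * ∑ i ∈ Finset.range (N + 2), (i : ℝ) * (cc i * cc (N + 1 - i))
        = ((N : ℝ) + 1) * ∑ m ∈ Finset.range (N + 2), cc m * cc (N + 1 - m) := by
      have := sum_reflect_pair (N + 1)
      push_cast at this
      linarith [this]
    have hpos : ((N : ℝ) + 1) ≠ 0 := by positivity
    have : ((N : ℝ) + 1) * ∑ m ∈ Finset.range (N + 2), cc m * cc (N + 1 - m)
        = ((N : ℝ) + 1) * 1 := by
      rw [← hC, ← hB]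
      rw [hA, ih]
    have := mul_left_cancel₀ hpos this
    simpa using this
/-- general term of the hypergeometric series `₂F₁(1/2, 1+s; 1; k)` -/
noncomputable def hterm (k : ℝ) (s n : ℕ) : ℝ :=
  poch (1/2) n * poch (1 + (s : ℝ)) n / ((n.factorial : ℝ) * n.factorial) * k ^ n

lemma hterm_nonneg {k : ℝ} (hk0 : 0 ≤ k) (s n : ℕ) : 0 ≤ hterm k s n := by
  have h1 := poch_pos (by norm_num : (0:ℝ) < 1/2) n
  have h2 := poch_pos (by positivity : (0:ℝ) < 1 + (s:ℝ)) n
  have h3 : (0:ℝ) < (n.factorial : ℝ) := Nat.cast_pos.mpr n.factorial_pos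
  have h4 : (0:ℝ) ≤ k ^ n := pow_nonneg hk0 n
  unfold hterm
  positivity

lemma hterm_zero_eq (k : ℝ) (n : ℕ) : hterm k 0 n = cc n * k ^ n := by
  unfold hterm cc
  rw [Nat.cast_zero, add_zero, poch_one]
  have hf : ((n.factorial : ℝ)) ≠ 0 := Nat.cast_ne_zero.mpr n.factorial_ne_zero
  field_simp

lemma hterm_one_eq (k : ℝ) (n : ℕ) : hterm k 1 n = ((n:ℝ) + 1) * (cc n * k ^ n) := by
  unfold hterm cc
  have h2 : (1 + ((1:ℕ) : ℝ)) = 2 := by norm_num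
  rw [h2, poch_two, Nat.factorial_succ]
  have hf : ((n.factorial : ℝ)) ≠ 0 := Nat.cast_ne_zero.mpr n.factorial_ne_zero
  push_cast
  field_simp

lemma hterm_succ (k : ℝ) (s n : ℕ) :
    hterm k s (n + 1) = hterm k s n *
      ((1/2 + (n:ℝ)) * (1 + (s:ℝ) + n) * k / (((n:ℝ) + 1) * ((n:ℝ) + 1))) := by
  unfold hterm
  rw [poch_succ, poch_succ, Nat.factorial_succ]
  have hf : ((n.factorial : ℝ)) ≠ 0 := Nat.cast_ne_zero.mpr n.factorial_ne_zero
  have hn1 : ((n:ℝ) + 1) ≠ 0 := by positivity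
  push_cast
  field_simp
  ring

lemma summable_hterm {k : ℝ} (hk0 : 0 ≤ k) (hk1 : k < 1) (s : ℕ) :
    Summable (hterm k s) := by
  apply summable_of_ratio_norm_eventually_le (r := (1 + k) / 2) (by linarith)
  have hratio : ∀ n : ℕ, (1/2 + (n:ℝ)) * (1 + (s:ℝ) + n) * k / (((n:ℝ) + 1) * ((n:ℝ) + 1))
      = k * (1 - (1/2) / ((n:ℝ) + 1)) * (1 + (s:ℝ) / ((n:ℝ) + 1)) := by
    intro n
    have hn1 : ((n:ℝ) + 1) ≠ 0 := by positivity
    field_simp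
    ring
  have htend : Filter.Tendsto
      (fun n : ℕ => k * (1 - (1/2) / ((n:ℝ) + 1)) * (1 + (s:ℝ) / ((n:ℝ) + 1)))
      Filter.atTop (nhds k) := by
    have hden : Filter.Tendsto (fun n : ℕ => ((n:ℝ) + 1)) Filter.atTop Filter.atTop :=
      Filter.tendsto_atTop_add_const_right _ _ tendsto_natCast_atTop_atTop
    have h1 : Filter.Tendsto (fun n : ℕ => (1:ℝ)/2 / ((n:ℝ) + 1)) Filter.atTop (nhds 0) :=
      Filter.Tendsto.div_atTop tendsto_const_nhds hden
    have h2 : Filter.Tendsto (fun n : ℕ => (s:ℝ) / ((n:ℝ) + 1)) Filter.atTop (nhds 0) :=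
      Filter.Tendsto.div_atTop tendsto_const_nhds hden
    have := ((tendsto_const_nhds (x := k)).mul
        ((tendsto_const_nhds (x := (1:ℝ))).sub h1)).mul
        ((tendsto_const_nhds (x := (1:ℝ))).add h2)
    simpa using this
  have hev : ∀ᶠ n : ℕ in Filter.atTop,
      k * (1 - (1/2) / ((n:ℝ) + 1)) * (1 + (s:ℝ) / ((n:ℝ) + 1)) < (1 + k) / 2 :=
    htend.eventually_lt_const (by linarith)
  filter_upwards [hev] with n hn
  rw [hterm_succ]
  rw [norm_mul]
  have hnn : (0:ℝ) ≤ (1/2 + (n:ℝ)) * (1 + (s:ℝ) + n) * k / (((n:ℝ) + 1) * ((n:ℝ) + 1)) := by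
    positivity
  rw [mul_comm (‖hterm k s n‖)]
  apply mul_le_mul_of_nonneg_right _ (norm_nonneg _)
  rw [Real.norm_eq_abs, abs_of_nonneg hnn, hratio]
  exact le_of_lt hn
lemma summable_cc_k {k : ℝ} (hk0 : 0 ≤ k) (hk1 : k < 1) :
    Summable (fun n => cc n * k ^ n) := by
  have := summable_hterm hk0 hk1 0
  apply this.congr
  intro n
  exact hterm_zero_eq k n

lemma sqrt_F0 {k : ℝ} (hk0 : 0 ≤ k) (hk1 : k < 1) :
    Real.sqrt (1 - k) * (∑' n, cc n * k ^ n) = 1 := by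
  set f := ∑' n, cc n * k ^ n with hf
  have hs : Summable (fun n => cc n * k ^ n) := summable_cc_k hk0 hk1
  have hnn : ∀ n, 0 ≤ cc n * k ^ n := fun n =>
    mul_nonneg (cc_nonneg n) (pow_nonneg hk0 n)
  have hnorm : Summable (fun n => ‖cc n * k ^ n‖) := by
    apply hs.congr
    intro n
    rw [Real.norm_eq_abs, abs_of_nonneg (hnn n)]
  have hcauchy : f * f = ∑' n : ℕ, ∑ m ∈ Finset.range (n + 1),
      (cc m * k ^ m) * (cc (n - m) * k ^ (n - m)) :=
    tsum_mul_tsum_eq_tsum_sum_range_of_summable_norm hnorm hnorm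
  have hinner : ∀ n : ℕ, ∑ m ∈ Finset.range (n + 1),
      (cc m * k ^ m) * (cc (n - m) * k ^ (n - m)) = k ^ n := by
    intro n
    have hcg : ∀ m ∈ Finset.range (n + 1),
        (cc m * k ^ m) * (cc (n - m) * k ^ (n - m)) = (cc m * cc (n - m)) * k ^ n := by
      intro m hm
      have hmn : m ≤ n := Nat.lt_succ_iff.mp (Finset.mem_range.mp hm)
      have hp : k ^ m * k ^ (n - m) = k ^ n := by
        rw [← pow_add, Nat.add_sub_cancel' hmn]
      linear_combination cc m * cc (n - m) * hp
    rw [Finset.sum_congr rfl hcg, ← Finset.sum_mul, conv_cc n, one_mul]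
  have hgeom : f * f = (1 - k)⁻¹ := by
    rw [hcauchy, tsum_congr hinner, tsum_geometric_of_lt_one hk0 hk1]
  have hf1 : (1:ℝ) ≤ f := by
    have := Summable.le_tsum hs 0 (fun i _ => hnn i)
    simpa [cc_zero] using this
  have h1k : (0:ℝ) < 1 - k := by linarith
  have hsq : (Real.sqrt (1 - k) * f) ^ 2 = 1 := by
    rw [mul_pow, Real.sq_sqrt h1k.le, sq, hgeom]
    field_simp
  have hx0 : 0 ≤ Real.sqrt (1 - k) * f := by positivity
  nlinarith [hsq, hx0]

/-- shift lemma: if `f 0 = 0` and the shifted series sums to `a`, so does `f`. -/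
lemma hasSum_of_shift {f : ℕ → ℝ} {a : ℝ} (h0 : f 0 = 0)
    (h : HasSum (fun n => f (n + 1)) a) : HasSum f a := by
  have := (hasSum_nat_add_iff (f := f) 1).mp h
  simpa [h0] using this

lemma F1_rel {k : ℝ} (hk0 : 0 ≤ k) (hk1 : k < 1) :
    2 * (1 - k) * (∑' n, hterm k 1 n) = (2 - k) * (∑' n, cc n * k ^ n) := by
  have hs0 : Summable (fun n => cc n * k ^ n) := summable_cc_k hk0 hk1
  have hs1 : Summable (hterm k 1) := summable_hterm hk0 hk1 1
  have hf := hs0.hasSum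
  have hU := hs1.hasSum
  set f := ∑' n, cc n * k ^ n with hfd
  set U := ∑' n, hterm k 1 n with hUd
  have hv : HasSum (fun n : ℕ => (n:ℝ) * (cc n * k ^ n)) (U - f) := by
    have heq : (fun n : ℕ => hterm k 1 n - cc n * k ^ n)
        = fun n : ℕ => (n:ℝ) * (cc n * k ^ n) := by
      funext n
      rw [hterm_one_eq]
      ring
    exact heq ▸ (hU.sub hf)
  have hw : HasSum (fun n : ℕ => ((n:ℝ) + 1) * (cc (n + 1) * k ^ (n + 1)))
      (k * ((U - f) + (1/2) * f)) := by
    have h1 := (hv.add (hf.mul_left (1/2))).mul_left k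
    have heq : (fun n : ℕ => k * ((n:ℝ) * (cc n * k ^ n) + 1/2 * (cc n * k ^ n)))
        = fun n : ℕ => ((n:ℝ) + 1) * (cc (n + 1) * k ^ (n + 1)) := by
      funext n
      rw [pow_succ]
      linear_combination (-(k ^ n * k)) * (cc_succ n)
    exact heq ▸ h1
  have hv' : HasSum (fun n : ℕ => ((n:ℝ) + 1) * (cc (n + 1) * k ^ (n + 1))) (U - f) := by
    have h2 : HasSum (fun n : ℕ => ((n+1:ℕ):ℝ) * (cc (n + 1) * k ^ (n + 1))) (U - f) := by
      apply (hasSum_nat_add_iff (f := fun n => (n:ℝ) * (cc n * k ^ n)) 1).mpr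
      simpa using hv
    have heq : (fun n : ℕ => ((n+1:ℕ):ℝ) * (cc (n + 1) * k ^ (n + 1)))
        = fun n : ℕ => ((n:ℝ) + 1) * (cc (n + 1) * k ^ (n + 1)) := by
      funext n
      push_cast
      ring
    exact heq ▸ h2
  have E : U - f = k * ((U - f) + (1/2) * f) := hv'.unique hw
  linear_combination 2 * E

lemma contiguous {k : ℝ} (hk0 : 0 ≤ k) (hk1 : k < 1) (s : ℕ) :
    (2 * (s:ℝ) + 4) * (1 - k) * (∑' n, hterm k (s + 2) n)
      = (2 - k) * (2 * (s:ℝ) + 3) * (∑' n, hterm k (s + 1) n)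
        - (2 * (s:ℝ) + 2) * (∑' n, hterm k s n) := by
  have hS0 := (summable_hterm hk0 hk1 s).hasSum
  have hS1 := (summable_hterm hk0 hk1 (s + 1)).hasSum
  have hS2 := (summable_hterm hk0 hk1 (s + 2)).hasSum
  set G0 := ∑' n, hterm k s n
  set G1 := ∑' n, hterm k (s + 1) n
  set G2 := ∑' n, hterm k (s + 2) n
  set L : ℕ → ℝ := fun n => (2 * (s:ℝ) + 4) * hterm k (s + 2) n
      - 2 * (2 * (s:ℝ) + 3) * hterm k (s + 1) n + (2 * (s:ℝ) + 2) * hterm k s n with hL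
  have hLsum : HasSum L ((2 * (s:ℝ) + 4) * G2 - 2 * (2 * (s:ℝ) + 3) * G1
      + (2 * (s:ℝ) + 2) * G0) :=
    ((hS2.mul_left _).sub (hS1.mul_left _)).add (hS0.mul_left _)
  have hM : HasSum (fun n => k * ((2 * (s:ℝ) + 4) * hterm k (s + 2) n
      - (2 * (s:ℝ) + 3) * hterm k (s + 1) n))
      (k * ((2 * (s:ℝ) + 4) * G2 - (2 * (s:ℝ) + 3) * G1)) :=
    HasSum.mul_left k ((hS2.mul_left _).sub (hS1.mul_left _))
  have hterm_id : ∀ n : ℕ, L (n + 1) = k * ((2 * (s:ℝ) + 4) * hterm k (s + 2) n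
      - (2 * (s:ℝ) + 3) * hterm k (s + 1) n) := by
    intro n
    have hc1 : (1 + ((s+1:ℕ):ℝ)) = (1 + (s:ℝ)) + 1 := by push_cast; ring
    have hc2 : (1 + ((s+2:ℕ):ℝ)) = ((1 + (s:ℝ)) + 1) + 1 := by push_cast; ring
    have e1 : (1 + (s:ℝ)) * poch ((1 + (s:ℝ)) + 1) n
        = poch (1 + (s:ℝ)) n * (1 + (s:ℝ) + n) := poch_shift _ n
    have e2 : ((1 + (s:ℝ)) + 1) * poch (((1 + (s:ℝ)) + 1) + 1) n
        = poch ((1 + (s:ℝ)) + 1) n * ((1 + (s:ℝ)) + 1 + n) := poch_shift _ n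
    have hfne : ((n.factorial : ℝ)) ≠ 0 := Nat.cast_ne_zero.mpr n.factorial_ne_zero
    have hn1 : ((n:ℝ) + 1) ≠ 0 := by positivity
    have hs1' : (1 + (s:ℝ)) ≠ 0 := by positivity
    have hs2' : ((1 + (s:ℝ)) + 1) ≠ 0 := by positivity
    have e1' : poch ((1 + (s:ℝ)) + 1) n
        = poch (1 + (s:ℝ)) n * (1 + (s:ℝ) + n) / (1 + (s:ℝ)) := by
      rw [eq_div_iff hs1']
      linear_combination e1
    have e2' : poch (((1 + (s:ℝ)) + 1) + 1) n
        = poch (1 + (s:ℝ)) n * (1 + (s:ℝ) + n) * ((1 + (s:ℝ)) + 1 + n)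
          / ((1 + (s:ℝ)) * ((1 + (s:ℝ)) + 1)) := by
      rw [eq_div_iff (mul_ne_zero hs1' hs2')]
      linear_combination ((1+(s:ℝ))+1+(n:ℝ)) * e1 + (1+(s:ℝ)) * e2
    rw [hL]
    simp only [hterm_succ]
    unfold hterm
    rw [hc1, hc2, e1', e2']
    field_simp
    ring
  have hL0 : L 0 = 0 := by
    rw [hL]
    unfold hterm
    simp [poch_zero]
    ring
  have hLsum' : HasSum L (k * ((2 * (s:ℝ) + 4) * G2 - (2 * (s:ℝ) + 3) * G1)) := by
    apply hasSum_of_shift hL0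
    exact (funext hterm_id : (fun n => L (n+1)) = _) ▸ hM
  have E := hLsum.unique hLsum'
  linear_combination E
/-- the angular integral `∫_{-π}^{π} (1 - k sin²θ)^n dθ` -/
noncomputable def II (k : ℝ) (n : ℕ) : ℝ := ∫ θ in (-π)..π, (1 - k * sin θ ^ 2) ^ n

lemma continuous_delta (k : ℝ) (n : ℕ) :
    Continuous fun θ : ℝ => (1 - k * sin θ ^ 2) ^ n := by
  fun_prop

lemma II_zero (k : ℝ) : II k 0 = 2 * π := by
  simp [II]
  ring

lemma II_one (k : ℝ) : II k 1 = π * (2 - k) := by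
  unfold II
  simp only [pow_one]
  rw [intervalIntegral.integral_sub intervalIntegrable_const
    (by apply Continuous.intervalIntegrable; fun_prop)]
  rw [intervalIntegral.integral_const_mul]
  rw [integral_sin_sq]
  simp [Real.sin_pi]
  ring

lemma II_rec (k : ℝ) (n : ℕ) :
    (2 * (n:ℝ) + 4) * II k (n + 2)
      = (2 - k) * (2 * (n:ℝ) + 3) * II k (n + 1) - (2 * (n:ℝ) + 2) * (1 - k) * II k n := by
  set φ : ℝ → ℝ := fun θ => (1 - 2 * sin θ ^ 2) * (1 - k * sin θ ^ 2) ^ (n + 1)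
      - 2 * k * ((n:ℝ) + 1) * (sin θ ^ 2 * (1 - sin θ ^ 2)) * (1 - k * sin θ ^ 2) ^ n
    with hφ
  have hderiv : ∀ θ : ℝ, HasDerivAt
      (fun θ => sin θ * cos θ * (1 - k * sin θ ^ 2) ^ (n + 1)) (φ θ) θ := by
    intro θ
    have h1 : HasDerivAt (fun θ => sin θ * cos θ) (cos θ ^ 2 - sin θ ^ 2) θ := by
      have := (Real.hasDerivAt_sin θ).mul (Real.hasDerivAt_cos θ)
      exact this.congr_deriv (by ring)
    have hs : HasDerivAt (fun θ : ℝ => sin θ ^ 2) (2 * sin θ * cos θ) θ := by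
      have := (Real.hasDerivAt_sin θ).pow 2
      exact this.congr_deriv (by push_cast; ring)
    have hu : HasDerivAt (fun θ : ℝ => 1 - k * sin θ ^ 2) (-(k * (2 * sin θ * cos θ))) θ := by
      have := (hasDerivAt_const θ (1:ℝ)).sub (hs.const_mul k)
      exact this.congr_deriv (by ring)
    have h2 := hu.pow (n + 1)
    have h3 := h1.mul h2
    refine h3.congr_deriv ?_
    symm
    have hpyth := sin_sq_add_cos_sq θ
    rw [hφ]
    simp only [Nat.add_sub_cancel, Pi.pow_apply]
    push_cast
    linear_combination (-(1 - k * sin θ ^ 2) ^ (n + 1)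
      + 2 * k * ((n:ℝ) + 1) * sin θ ^ 2 * (1 - k * sin θ ^ 2) ^ n) * hpyth
  have hcontφ : Continuous φ := by
    rw [hφ]
    fun_prop
  have hFTC : ∫ θ in (-π)..π, φ θ = 0 := by
    rw [intervalIntegral.integral_eq_sub_of_hasDerivAt (fun θ _ => hderiv θ)
      (hcontφ.intervalIntegrable _ _)]
    simp [Real.sin_pi]
  -- pointwise identity
  have hpt : ∀ θ : ℝ, k * φ θ
      = (2 * (n:ℝ) + 4) * (1 - k * sin θ ^ 2) ^ (n + 2)
        - (2 - k) * (2 * (n:ℝ) + 3) * (1 - k * sin θ ^ 2) ^ (n + 1)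
        + (2 * (n:ℝ) + 2) * (1 - k) * (1 - k * sin θ ^ 2) ^ n := by
    intro θ
    rw [hφ]
    have p1 : (1 - k * sin θ ^ 2) ^ (n + 1) = (1 - k * sin θ ^ 2) ^ n * (1 - k * sin θ ^ 2) :=
      pow_succ _ _
    have p2 : (1 - k * sin θ ^ 2) ^ (n + 2)
        = (1 - k * sin θ ^ 2) ^ n * (1 - k * sin θ ^ 2) * (1 - k * sin θ ^ 2) := by
      rw [pow_succ, pow_succ]
    rw [p1, p2]
    ring
  -- integrate the pointwise identity
  have hInt : ∀ m : ℕ, IntervalIntegrable (fun θ : ℝ => (1 - k * sin θ ^ 2) ^ m)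
      MeasureTheory.volume (-π) π := fun m => (continuous_delta k m).intervalIntegrable _ _
  have hint2 : ∫ θ in (-π)..π, k * φ θ
      = (2 * (n:ℝ) + 4) * II k (n + 2) - (2 - k) * (2 * (n:ℝ) + 3) * II k (n + 1)
        + (2 * (n:ℝ) + 2) * (1 - k) * II k n := by
    rw [intervalIntegral.integral_congr (g := fun θ =>
      (2 * (n:ℝ) + 4) * (1 - k * sin θ ^ 2) ^ (n + 2)
        - (2 - k) * (2 * (n:ℝ) + 3) * (1 - k * sin θ ^ 2) ^ (n + 1)
        + (2 * (n:ℝ) + 2) * (1 - k) * (1 - k * sin θ ^ 2) ^ n)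
      (fun θ _ => hpt θ)]
    rw [intervalIntegral.integral_add (((hInt (n+2)).const_mul _).sub ((hInt (n+1)).const_mul _))
      ((hInt n).const_mul _)]
    rw [intervalIntegral.integral_sub ((hInt (n+2)).const_mul _) ((hInt (n+1)).const_mul _)]
    rw [intervalIntegral.integral_const_mul, intervalIntegral.integral_const_mul,
      intervalIntegral.integral_const_mul]
    rfl
  have hzero : ∫ θ in (-π)..π, k * φ θ = 0 := by
    rw [intervalIntegral.integral_const_mul, hFTC, mul_zero]
  rw [hint2] at hzero
  linarith
lemma bridge {k : ℝ} (hk0 : 0 ≤ k) (hk1 : k < 1) (s : ℕ) :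
    II k s = 2 * π * (1 - k) ^ s * Real.sqrt (1 - k) * (∑' n, hterm k s n) := by
  have key : ∀ t : ℕ,
      (II k t = 2 * π * (1 - k) ^ t * Real.sqrt (1 - k) * (∑' n, hterm k t n)) ∧
      (II k (t + 1) = 2 * π * (1 - k) ^ (t + 1) * Real.sqrt (1 - k)
        * (∑' n, hterm k (t + 1) n)) := by
    intro t
    induction t with
    | zero =>
      have h0 : (∑' n, hterm k 0 n) = ∑' n, cc n * k ^ n := tsum_congr (hterm_zero_eq k)
      have hF0 := sqrt_F0 hk0 hk1
      constructor
      · rw [II_zero, h0, pow_zero]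
        linear_combination (-(2 * π)) * hF0
      · have hF1 := F1_rel hk0 hk1
        simp only [zero_add]
        rw [II_one, pow_one]
        linear_combination (-(π * Real.sqrt (1 - k))) * hF1 - π * (2 - k) * hF0
    | succ t ih =>
      refine ⟨ih.2, ?_⟩
      have hrec := II_rec k t
      have hcont := contiguous hk0 hk1 t
      have h1 := ih.1
      have h2 := ih.2
      have hne : (2 * (t:ℝ) + 4) ≠ 0 := by positivity
      have q1 : (1 - k) ^ (t + 1) = (1 - k) ^ t * (1 - k) := pow_succ _ _
      have q2 : (1 - k) ^ (t + 2) = (1 - k) ^ t * (1 - k) * (1 - k) := by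
        rw [pow_succ, pow_succ]
      rw [q1] at h2
      apply mul_left_cancel₀ hne
      rw [q2]
      linear_combination hrec + (2 - k) * (2 * (t:ℝ) + 3) * h2
        - (2 * (t:ℝ) + 2) * (1 - k) * h1
        - 2 * π * (1 - k) ^ t * (1 - k) * Real.sqrt (1 - k) * hcont
  exact (key s).1


/-- For `λ ≥ β > 0` and `s : ℕ`,
`∫_{-π}^{π} (cos²θ/β² + sin²θ/λ²)^s dθ = (2πβ/λ^(1+2s)) ₂F₁(1/2, 1+s; 1; 1-β²/λ²)`. -/
theorem angular_integral_hypergeometric' (β lam : ℝ) (s : ℕ)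
    (hlam : lam ≥ β) (hβ : β > 0) :
    ∫ θ in (-π)..π, (Real.cos θ ^ 2 / β ^ 2 + Real.sin θ ^ 2 / lam ^ 2) ^ s
      = (2 * π * β / lam ^ (1 + 2 * s)) *
        twoF1 (1 / 2) (1 + s) 1 (1 - β ^ 2 / lam ^ 2) := by
  have hlam0 : (0:ℝ) < lam := lt_of_lt_of_le hβ hlam
  have hb2 : β ^ 2 ≤ lam ^ 2 := by nlinarith
  set k : ℝ := 1 - β ^ 2 / lam ^ 2 with hk
  have hk0 : 0 ≤ k := by
    rw [hk]
    have h : β ^ 2 / lam ^ 2 ≤ 1 := by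
      rw [div_le_one (by positivity)]
      exact hb2
    linarith
  have hk1 : k < 1 := by
    rw [hk]
    have h : 0 < β ^ 2 / lam ^ 2 := by positivity
    linarith
  have h1k : 1 - k = β ^ 2 / lam ^ 2 := by rw [hk]; ring
  have hint : ∀ θ : ℝ, (cos θ ^ 2 / β ^ 2 + sin θ ^ 2 / lam ^ 2) ^ s
      = (1 - k * sin θ ^ 2) ^ s / (β ^ 2) ^ s := by
    intro θ
    have hb : cos θ ^ 2 / β ^ 2 + sin θ ^ 2 / lam ^ 2 = (1 - k * sin θ ^ 2) / β ^ 2 := by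
      rw [hk, cos_sq']
      field_simp
      ring
    rw [hb, div_pow]
  have hIeq : (∫ θ in (-π)..π, (cos θ ^ 2 / β ^ 2 + sin θ ^ 2 / lam ^ 2) ^ s)
      = II k s / (β ^ 2) ^ s := by
    rw [intervalIntegral.integral_congr (fun θ _ => hint θ), intervalIntegral.integral_div]
    rfl
  rw [hIeq, bridge hk0 hk1 s]
  have htF : twoF1 (1/2) (1 + (s:ℝ)) 1 k = ∑' n, hterm k s n := by
    unfold twoF1 hterm
    apply tsum_congr
    intro n
    rw [poch_one]
    have hf : ((n.factorial : ℝ)) ≠ 0 := Nat.cast_ne_zero.mpr n.factorial_ne_zero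
    field_simp
  rw [htF]
  have hsqrt : Real.sqrt (1 - k) = β / lam := by
    rw [h1k, show β ^ 2 / lam ^ 2 = (β / lam) ^ 2 by ring]
    exact Real.sqrt_sq (by positivity)
  rw [hsqrt, h1k, div_pow]
  have hβ0 : (β:ℝ) ≠ 0 := ne_of_gt hβ
  have hlamne : (lam:ℝ) ≠ 0 := ne_of_gt hlam0
  have hpow : lam ^ (1 + 2 * s) = lam * (lam ^ 2) ^ s := by
    rw [pow_add, pow_mul, pow_one]
  rw [hpow]
  field_simp
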